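/- Let W ⊆ ℝ² be open and connected and let Φ : W → ℝ² be a C¹ map. Assume that for every w ∈ W there exist sequences h_n → 0⁺ and r_n → 0⁺ with h_n/r_n → 0, points w_n → w with the closed ball B(w_n, r_n) contained in W, vectors a_n, b_n ∈ ℝ², and errors δ_n ≥ 0 with δ_n/h_n → 0, such that for every lattice point x ∈ (h_n ℤ² + a_n) ∩ B(w_n, r_n) the distance from Φ(x) to the set h_n ℤ² + b_n is at most δ_n. Then the derivative DΦ(w) is a 2×2 matrix with integer entries for every w ∈ W, and DΦ is constant on W (equal to a single integer matrix M ∈ M₂(ℤ)). -/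

import Mathlib

/-! At `w ∈ W`, let `p` be the point of `hₙℤ² + aₙ` nearest to `wₙ` and `q = p + hₙ u` for an
integer vector `u`; since `hₙ / rₙ → 0`, both lie in `B(wₙ, rₙ)`. Their images are `δₙ`-close to
`hₙℤ² + bₙ`, so `Φ q - Φ p` is `2δₙ`-close to `hₙℤ²`, while by the mean value inequality it is
`hₙ DΦ(w) u + o(hₙ)`, because the balls shrink to `w` and `DΦ` is continuous. Dividing by `hₙ`,
`DΦ(w) u` is a limit of integer vectors, hence integral. Thus `w ↦ DΦ(w)` is continuous on the
connected set `W` and sends `ℤ²` into the discrete set `ℤ²`, so it is constant. -/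

open Filter Metric

/-- The **asymptotic lattice-mapping property** of a map `Φ` at every point of
a set `W ⊆ ℝ²`: for every `w ∈ W` there are scales `h_n → 0⁺`, radii
`r_n → 0⁺` with `h_n / r_n → 0`, centers `w_n → w` with
`closedBall (w_n, r_n) ⊆ W`, offsets `a_n, b_n ∈ ℝ²` and errors `δ_n ≥ 0` with
`δ_n / h_n → 0`, such that every point of the lattice `h_n ℤ² + a_n` lying in
`closedBall (w_n, r_n)` is mapped by `Φ` within distance `δ_n` of the lattice
`h_n ℤ² + b_n`. -/
def LatticeMappingProperty (Φ : ℝ × ℝ → ℝ × ℝ) (W : Set (ℝ × ℝ)) : Prop :=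
  ∀ w ∈ W, ∃ (hseq rseq δ : ℕ → ℝ) (wseq a b : ℕ → ℝ × ℝ),
    (∀ n, 0 < hseq n) ∧ (∀ n, 0 < rseq n) ∧ (∀ n, 0 ≤ δ n) ∧
    Tendsto hseq atTop (nhds 0) ∧
    Tendsto rseq atTop (nhds 0) ∧
    Tendsto (fun n => hseq n / rseq n) atTop (nhds 0) ∧
    Tendsto (fun n => δ n / hseq n) atTop (nhds 0) ∧
    Tendsto wseq atTop (nhds w) ∧
    (∀ n, closedBall (wseq n) (rseq n) ⊆ W) ∧
    (∀ n, ∀ k : ℤ × ℤ,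
      a n + hseq n • ((k.1 : ℝ), (k.2 : ℝ)) ∈ closedBall (wseq n) (rseq n) →
      ∃ m : ℤ × ℤ,
        ‖Φ (a n + hseq n • ((k.1 : ℝ), (k.2 : ℝ)))
          - (b n + hseq n • ((m.1 : ℝ), (m.2 : ℝ)))‖ ≤ δ n)

open Set Topology

def intPoint (k : ℤ × ℤ) : ℝ × ℝ := ((k.1 : ℝ), (k.2 : ℝ))

@[simp]
lemma intPoint_add (k l : ℤ × ℤ) : intPoint (k + l) = intPoint k + intPoint l := by
  simp [intPoint]

@[simp]
lemma intPoint_sub (k l : ℤ × ℤ) : intPoint (k - l) = intPoint k - intPoint l := by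
  simp [intPoint]

lemma isClosedEmbedding_intPoint : IsClosedEmbedding intPoint :=
  Int.isClosedEmbedding_coe_real.prodMap Int.isClosedEmbedding_coe_real

lemma exists_abs_add_mul_intCast_sub_le (a z : ℝ) {H : ℝ} (hH : 0 < H) :
    ∃ k : ℤ, |a + H * k - z| ≤ H / 2 := by
  set t := (z - a) / H
  have ht : a + H * round t - z = -(H * (t - round t)) := by
    simp only [t]
    field_simp
    ring
  refine ⟨round t, ?_⟩
  calc |a + H * round t - z| = H * |t - round t| := by
        rw [ht, abs_neg, abs_mul, abs_of_pos hH]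
    _ ≤ H * (1 / 2) := by gcongr; exact abs_sub_round t
    _ = H / 2 := by ring

lemma exists_norm_add_smul_intPoint_sub_le (a z : ℝ × ℝ) {H : ℝ} (hH : 0 < H) :
    ∃ k : ℤ × ℤ, ‖a + H • intPoint k - z‖ ≤ H / 2 := by
  obtain ⟨k₁, hk₁⟩ := exists_abs_add_mul_intCast_sub_le a.1 z.1 hH
  obtain ⟨k₂, hk₂⟩ := exists_abs_add_mul_intCast_sub_le a.2 z.2 hH
  exact ⟨(k₁, k₂), norm_prod_le_iff.2 ⟨hk₁, hk₂⟩⟩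

lemma exists_norm_apply_intPoint_sub_le_of_lattice_scale
    {Φ : ℝ × ℝ → ℝ × ℝ} {D : ℝ × ℝ →L[ℝ] ℝ × ℝ} {c a b : ℝ × ℝ} {H r δ ε : ℝ} (hH : 0 < H)
    (hdiff : ∀ x ∈ closedBall c r, DifferentiableAt ℝ Φ x)
    (hD : ∀ x ∈ closedBall c r, ‖fderiv ℝ Φ x - D‖ ≤ ε)
    (hlat : ∀ k : ℤ × ℤ, a + H • intPoint k ∈ closedBall c r →
      ∃ m : ℤ × ℤ, ‖Φ (a + H • intPoint k) - (b + H • intPoint m)‖ ≤ δ)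
    {u : ℤ × ℤ} (hu : H * (‖intPoint u‖ + 1) ≤ r) :
    ∃ m : ℤ × ℤ, H * ‖D (intPoint u) - intPoint m‖ ≤ 2 * δ + ε * (H * ‖intPoint u‖) := by
  obtain ⟨k, hk⟩ := exists_norm_add_smul_intPoint_sub_le a c hH
  set p := a + H • intPoint k
  set q := a + H • intPoint (k + u)
  have hqp : q - p = H • intPoint u := by simp only [q, p, intPoint_add]; module
  have hHu : ‖H • intPoint u‖ = H * ‖intPoint u‖ := by
    rw [norm_smul, Real.norm_of_nonneg hH.le]
  have hp : p ∈ closedBall c r := by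
    rw [mem_closedBall, dist_eq_norm]
    nlinarith [norm_nonneg (intPoint u)]
  have hq : q ∈ closedBall c r := by
    rw [mem_closedBall, dist_eq_norm]
    calc ‖q - c‖ = ‖(p - c) + (q - p)‖ := by congr 1; abel
      _ ≤ H / 2 + H * ‖intPoint u‖ := (norm_add_le _ _).trans (by rw [hqp, hHu]; gcongr)
      _ ≤ r := by linarith
  obtain ⟨m, hm⟩ := hlat k hp
  obtain ⟨m', hm'⟩ := hlat (k + u) hq
  have hmvt := (convex_closedBall c r).norm_image_sub_le_of_norm_fderiv_le' hdiff hD hp hq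
  rw [hqp, map_smul, hHu] at hmvt
  refine ⟨m' - m, ?_⟩
  have hsplit : H • (D (intPoint u) - intPoint (m' - m)) =
      (Φ q - (b + H • intPoint m')) - (Φ p - (b + H • intPoint m))
        - (Φ q - Φ p - H • D (intPoint u)) := by
    rw [intPoint_sub]; module
  calc H * ‖D (intPoint u) - intPoint (m' - m)‖
      = ‖H • (D (intPoint u) - intPoint (m' - m))‖ := by
        rw [norm_smul, Real.norm_of_nonneg hH.le]
    _ ≤ δ + δ + ε * (H * ‖intPoint u‖) := by
        rw [hsplit]
        exact (norm_sub_le _ _).trans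
          (add_le_add ((norm_sub_le _ _).trans (add_le_add hm' hm)) hmvt)
    _ = 2 * δ + ε * (H * ‖intPoint u‖) := by ring

lemma eventually_closedBall_subset_of_tendsto {α ι : Type*} [PseudoMetricSpace α]
    {l : Filter ι} {c : ι → α} {r : ι → ℝ} {x : α} {s : Set α}
    (hc : Tendsto c l (𝓝 x)) (hr : Tendsto r l (𝓝 0)) (hs : s ∈ 𝓝 x) :
    ∀ᶠ i in l, closedBall (c i) (r i) ⊆ s := by
  obtain ⟨ε, hε, hεs⟩ := nhds_basis_closedBall.mem_iff.1 hs
  filter_upwards [hc.eventually (closedBall_mem_nhds x (half_pos hε)),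
    hr.eventually (ge_mem_nhds (half_pos hε))] with i hci hri
  exact (closedBall_subset_closedBall' (by linarith [mem_closedBall.1 hci])).trans hεs

lemma LatticeMappingProperty.fderiv_apply_intPoint_mem_range {Φ : ℝ × ℝ → ℝ × ℝ}
    {W : Set (ℝ × ℝ)} (hlat : LatticeMappingProperty Φ W) (hW : IsOpen W)
    (hΦ : ContDiffOn ℝ 1 Φ W) {w : ℝ × ℝ} (hw : w ∈ W) (u : ℤ × ℤ) :
    fderiv ℝ Φ w (intPoint u) ∈ range intPoint := by
  set D := fderiv ℝ Φ w
  rw [← isClosedEmbedding_intPoint.isClosed_range.closure_eq, Metric.mem_closure_iff]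
  intro ε hε
  set η := ε / (2 * (‖intPoint u‖ + 1))
  have hη : 0 < η := by positivity
  have hηu : η * ‖intPoint u‖ < ε / 2 := by
    rw [div_mul_eq_mul_div, div_lt_iff₀ (by positivity)]
    nlinarith [norm_nonneg (intPoint u)]
  have hnear : {x | DifferentiableAt ℝ Φ x ∧ ‖fderiv ℝ Φ x - D‖ ≤ η} ∈ 𝓝 w := by
    have hcont := (hΦ.continuousOn_fderiv_of_isOpen hW le_rfl).continuousAt (hW.mem_nhds hw)
    filter_upwards [hW.mem_nhds hw, hcont.eventually (closedBall_mem_nhds D hη)] with x hxW hx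
    exact ⟨(hΦ.differentiableOn one_ne_zero).differentiableAt (hW.mem_nhds hxW),
      mem_closedBall_iff_norm.1 hx⟩
  obtain ⟨h, r, δ, c, a, b, hh, hr, -, -, hr0, hhr, hδh, hc, -, hkey⟩ := hlat w hw
  have hballs := eventually_closedBall_subset_of_tendsto hc hr0 hnear
  have hscale : ∀ᶠ n in atTop, h n * (‖intPoint u‖ + 1) ≤ r n := by
    filter_upwards [hhr.eventually (gt_mem_nhds (by positivity : 0 < 1 / (‖intPoint u‖ + 1)))]
      with n hn
    rw [div_lt_div_iff₀ (hr n) (by positivity), one_mul] at hn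
    exact hn.le
  have herr : ∀ᶠ n in atTop, δ n < ε / 4 * h n := by
    filter_upwards [hδh.eventually (gt_mem_nhds (by positivity : 0 < ε / 4))] with n hn
    rwa [div_lt_iff₀ (hh n)] at hn
  obtain ⟨n, hball, hscale, herr⟩ := (hballs.and (hscale.and herr)).exists
  obtain ⟨m, hm⟩ := exists_norm_apply_intPoint_sub_le_of_lattice_scale (hh n)
    (fun x hx => (hball hx).1) (fun x hx => (hball hx).2) (hkey n) hscale
  refine ⟨intPoint m, mem_range_self m, ?_⟩
  rw [dist_eq_norm]
  refine lt_of_mul_lt_mul_left ?_ (hh n).le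
  calc h n * ‖D (intPoint u) - intPoint m‖ ≤ 2 * δ n + η * (h n * ‖intPoint u‖) := hm
    _ < h n * ε := by nlinarith [mul_lt_mul_of_pos_left hηu (hh n)]

lemma IsPreconnected.eq_of_apply_intPoint_mem_range {X : Type*} [TopologicalSpace X]
    {S : Set X} (hS : IsPreconnected S) {L : X → ℝ × ℝ →L[ℝ] ℝ × ℝ} (hL : ContinuousOn L S)
    (hint : ∀ x ∈ S, ∀ u, L x (intPoint u) ∈ range intPoint) {x y : X} (hx : x ∈ S)
    (hy : y ∈ S) : L x = L y := by
  have hcol (u : ℤ × ℤ) : L x (intPoint u) = L y (intPoint u) :=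
    hS.constant_of_mapsTo isClosedEmbedding_intPoint.isInducing.isDiscrete_range
      ((ContinuousLinearMap.apply ℝ _ (intPoint u)).continuous.comp_continuousOn hL)
      (fun z hz => hint z hz u) hx hy
  exact ContinuousLinearMap.prod_ext
    (ContinuousLinearMap.ext_ring (by simpa [intPoint] using hcol (1, 0)))
    (ContinuousLinearMap.ext_ring (by simpa [intPoint] using hcol (0, 1)))

lemma exists_intMatrix_apply_eq {L : ℝ × ℝ →L[ℝ] ℝ × ℝ}
    (hL : ∀ u, L (intPoint u) ∈ range intPoint) :
    ∃ M : Matrix (Fin 2) (Fin 2) ℤ, ∀ v : ℝ × ℝ,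
      L v = ((M 0 0 : ℝ) * v.1 + (M 0 1 : ℝ) * v.2, (M 1 0 : ℝ) * v.1 + (M 1 1 : ℝ) * v.2) := by
  obtain ⟨m₁, hm₁⟩ := hL (1, 0)
  obtain ⟨m₂, hm₂⟩ := hL (0, 1)
  refine ⟨!![m₁.1, m₂.1; m₁.2, m₂.2], fun v => ?_⟩
  have hv : v = v.1 • ((1 : ℝ), (0 : ℝ)) + v.2 • ((0 : ℝ), (1 : ℝ)) := by ext <;> simp
  simp only [intPoint, Int.cast_one, Int.cast_zero] at hm₁ hm₂
  rw [hv, map_add, map_smul, map_smul, ← hm₁, ← hm₂]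
  ext <;> simp [mul_comm]

/-- **Lattice rigidity** (underlying Proposition 4.2): a `C¹` map `Φ` on a
connected open set `W ⊆ ℝ²` which asymptotically maps rescaled lattices
`h ℤ²` (up to translations and `o(h)` errors, over balls large compared to
`h`) to rescaled lattices has, at every point, an integer `2×2` matrix as its
derivative, and this derivative is constant on `W`. -/
theorem lattice_rigidity_constant_integer_derivative
    (W : Set (ℝ × ℝ)) (hWopen : IsOpen W) (hWconn : IsConnected W)
    (Φ : ℝ × ℝ → ℝ × ℝ) (hΦ : ContDiffOn ℝ 1 Φ W)
    (hlat : LatticeMappingProperty Φ W) :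
    ∃ M : Matrix (Fin 2) (Fin 2) ℤ,
      ∀ w ∈ W, ∀ v : ℝ × ℝ,
        fderiv ℝ Φ w v =
          (((M 0 0 : ℝ) * v.1 + (M 0 1 : ℝ) * v.2),
           ((M 1 0 : ℝ) * v.1 + (M 1 1 : ℝ) * v.2)) := by
  obtain ⟨w₀, hw₀⟩ := hWconn.nonempty
  have hint (w : ℝ × ℝ) (hw : w ∈ W) (u : ℤ × ℤ) :
      fderiv ℝ Φ w (intPoint u) ∈ range intPoint :=
    hlat.fderiv_apply_intPoint_mem_range hWopen hΦ hw u
  have hconst (w : ℝ × ℝ) (hw : w ∈ W) : fderiv ℝ Φ w = fderiv ℝ Φ w₀ :=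
    hWconn.isPreconnected.eq_of_apply_intPoint_mem_range
      (hΦ.continuousOn_fderiv_of_isOpen hWopen le_rfl) hint hw hw₀
  obtain ⟨M, hM⟩ := exists_intMatrix_apply_eq (hint w₀ hw₀)
  exact ⟨M, fun w hw v => by rw [hconst w hw, hM]⟩
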